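/- (Massart's lemma) Let T ⊆ ℝ^n be a finite set with B = max_{t∈T} ‖t‖_2, and let σ_1, …, σ_n be independent Rademacher variables. Then E_σ[max_{t∈T} Σ_{i=1}^n σ_i t_i] ≤ B √(2 log |T|). -/

import Mathlib

/-!
Fix `l > 0`. By Jensen, `exp (l · E max_t ⟨σ, t⟩) ≤ E exp (l · max_t ⟨σ, t⟩)`, and the exponential
of a maximum is at most the sum of the exponentials, so this is at most
`∑_t E exp (l ⟨σ, t⟩) = ∑_t ∏_i cosh (l tᵢ) ≤ |T| exp (l² B² / 2)` since `cosh x ≤ exp (x² / 2)`.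
Taking logarithms, `E max_t ⟨σ, t⟩ ≤ log |T| / l + l B² / 2`, and `l = √(2 log |T|) / B` gives the bound.
-/

open Finset Real

lemma exp_mul_sup'_le_sum_exp {β : Type*} {s : Finset β} (hs : s.Nonempty) (f : β → ℝ) (l : ℝ) :
    exp (l * s.sup' hs f) ≤ ∑ b ∈ s, exp (l * f b) := by
  obtain ⟨b, hb, hmax⟩ := exists_mem_eq_sup' hs f
  rw [hmax]
  exact single_le_sum (f := fun b => exp (l * f b)) (fun _ _ => (exp_pos _).le) hb

lemma exp_sum_div_card_le_sum_exp_div_card {α : Type*} [Fintype α] [Nonempty α] (f : α → ℝ) :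
    exp ((∑ a, f a) / Fintype.card α) ≤ (∑ a, exp (f a)) / Fintype.card α := by
  have hcard : (0 : ℝ) < Fintype.card α := by exact_mod_cast Fintype.card_pos
  have hweights : ∑ _a : α, (Fintype.card α : ℝ)⁻¹ = 1 := by
    rw [sum_const, card_univ, nsmul_eq_mul, mul_inv_cancel₀ hcard.ne']
  have jensen := convexOn_exp.map_sum_le (t := univ) (w := fun _ => (Fintype.card α : ℝ)⁻¹)
    (p := f) (fun _ _ => by positivity) hweights (fun _ _ => Set.mem_univ _)
  rw [sum_div, sum_div]
  simpa only [smul_eq_mul, inv_mul_eq_div] using jensen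

section SignedSums

variable {ι : Type*} [Fintype ι] [DecidableEq ι]

lemma sum_exp_signed_sum_eq_prod_cosh (x : ι → ℝ) :
    ∑ σ : ι → Bool, exp (∑ i, (if σ i then (1 : ℝ) else -1) * x i) = ∏ i, 2 * cosh (x i) := by
  simp_rw [exp_sum]
  rw [← Fintype.prod_sum (fun i (b : Bool) => exp ((if b then (1 : ℝ) else -1) * x i))]
  refine prod_congr rfl fun i _ => ?_
  rw [Fintype.sum_bool, cosh_eq]
  simp only [if_true, one_mul, Bool.false_eq_true, if_false, neg_mul]
  ring

lemma sum_exp_mul_signed_sum_le (x : ι → ℝ) (l : ℝ) :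
    ∑ σ : ι → Bool, exp (l * ∑ i, (if σ i then (1 : ℝ) else -1) * x i)
      ≤ 2 ^ Fintype.card ι * exp (l ^ 2 * (∑ i, x i ^ 2) / 2) := by
  have hscale : ∀ σ : ι → Bool, l * ∑ i, (if σ i then (1 : ℝ) else -1) * x i
      = ∑ i, (if σ i then (1 : ℝ) else -1) * (l * x i) := fun σ => by
    rw [mul_sum]; exact sum_congr rfl fun i _ => by ring
  have hsq : l ^ 2 * (∑ i, x i ^ 2) / 2 = ∑ i, (l * x i) ^ 2 / 2 := by
    rw [mul_sum, sum_div]; exact sum_congr rfl fun i _ => by ring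
  simp_rw [hscale, hsq, sum_exp_signed_sum_eq_prod_cosh, prod_mul_distrib, prod_const, card_univ,
    exp_sum]
  gcongr with i
  exact cosh_le_exp_half_sq _

lemma mul_rademacher_average_sup'_le (T : Finset (ι → ℝ)) (hT : T.Nonempty) {R : ℝ}
    (hR : ∀ t ∈ T, ∑ i, t i ^ 2 ≤ R) (l : ℝ) :
    l * ((∑ σ : ι → Bool, T.sup' hT fun t => ∑ i, (if σ i then (1 : ℝ) else -1) * t i)
        / 2 ^ Fintype.card ι)
      ≤ log T.card + l ^ 2 * R / 2 := by
  set N : ℝ := 2 ^ Fintype.card ι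
  have hN : Fintype.card (ι → Bool) = N := by simp [N]
  have hN0 : 0 < N := by positivity
  have hT0 : (0 : ℝ) < T.card := by exact_mod_cast hT.card_pos
  suffices h : exp (l * ((∑ σ : ι → Bool, T.sup' hT fun t =>
      ∑ i, (if σ i then (1 : ℝ) else -1) * t i) / N)) ≤ T.card * exp (l ^ 2 * R / 2) by
    simpa only [log_exp, log_mul hT0.ne' (exp_pos _).ne'] using log_le_log (exp_pos _) h
  calc exp (l * ((∑ σ : ι → Bool, T.sup' hT fun t =>
        ∑ i, (if σ i then (1 : ℝ) else -1) * t i) / N))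
      = exp ((∑ σ : ι → Bool, l * T.sup' hT fun t =>
          ∑ i, (if σ i then (1 : ℝ) else -1) * t i) / N) := by rw [← mul_div_assoc, mul_sum]
    _ ≤ (∑ σ : ι → Bool, exp (l * T.sup' hT fun t =>
          ∑ i, (if σ i then (1 : ℝ) else -1) * t i)) / N := by
        rw [← hN]; exact exp_sum_div_card_le_sum_exp_div_card _
    _ ≤ (∑ σ : ι → Bool, ∑ t ∈ T, exp (l * ∑ i, (if σ i then (1 : ℝ) else -1) * t i)) / N := by
        gcongr with σ; exact exp_mul_sup'_le_sum_exp hT _ l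
    _ = (∑ t ∈ T, ∑ σ : ι → Bool, exp (l * ∑ i, (if σ i then (1 : ℝ) else -1) * t i)) / N := by
        rw [sum_comm]
    _ ≤ (∑ _t ∈ T, N * exp (l ^ 2 * R / 2)) / N := by
        gcongr with t ht
        exact (sum_exp_mul_signed_sum_le t l).trans (by gcongr; exact hR t ht)
    _ = T.card * exp (l ^ 2 * R / 2) := by
        rw [sum_const, nsmul_eq_mul]; field_simp

end SignedSums

lemma le_mul_sqrt_of_forall_mul_le {E L B : ℝ} (hL : 0 ≤ L) (hB : 0 ≤ B)
    (h : ∀ l > 0, l * E ≤ L + l ^ 2 * B ^ 2 / 2) : E ≤ B * √(2 * L) := by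
  by_contra! hE
  have hE0 : 0 < E := lt_of_le_of_lt (by positivity) hE
  rcases hB.eq_or_lt with rfl | hB0
  · have := h (L / E + 1) (by positivity)
    rw [add_mul, div_mul_cancel₀ _ hE0.ne'] at this
    linarith
  · -- `l = E / B²` maximizes `l E - l² B² / 2`.
    have hopt := h (E / B ^ 2) (by positivity)
    have hsq : E ^ 2 ≤ (B * √(2 * L)) ^ 2 := by
      rw [mul_pow, sq_sqrt (by positivity)]
      field_simp at hopt
      nlinarith
    nlinarith [mul_nonneg hB (sqrt_nonneg (2 * L))]

theorem stmt7 (n : ℕ) (T : Finset (Fin n → ℝ)) (hT : T.Nonempty) (B : ℝ)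
    (hB : B = T.sup' hT fun t => Real.sqrt (∑ i : Fin n, (t i) ^ 2)) :
    (∑ σ : Fin n → Bool,
        T.sup' hT fun t => ∑ i : Fin n, (if σ i then (1 : ℝ) else -1) * t i) / 2 ^ n
      ≤ B * Real.sqrt (2 * Real.log T.card) := by
  have hnorm : ∀ t ∈ T, 0 ≤ B ∧ ∑ i, t i ^ 2 ≤ B ^ 2 := fun t ht =>
    sqrt_le_iff.mp (hB ▸ le_sup' (fun t => √(∑ i, t i ^ 2)) ht)
  refine le_mul_sqrt_of_forall_mul_le (log_natCast_nonneg _) (hnorm _ hT.choose_spec).1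
    fun l _ => ?_
  simpa only [Fintype.card_fin] using
    mul_rademacher_average_sup'_le T hT (fun t ht => (hnorm t ht).2) l
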